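/- Let k be a field and E = k[X₁,…,X_m,Y,Z,T]/(X₁^{r₁}⋯X_m^{r_m}Y − f(Z,T)) with f ≠ 0, m ≥ 2, r_j > 1. Then for every λ ∈ k*, the element x₂ − λ (image of X₂ − λ) is a prime element of E, and E/(x₂−λ)E ≅ k[X₁,X₃,…,X_m,Y,Z,T]/(λ^{r₂}X₁^{r₁}X₃^{r₃}⋯X_m^{r_m}Y − f(Z,T)). -/

import Mathlib

open MvPolynomial

variable {k : Type*} [Field k] {m : ℕ}

/-- The relation `X₁^{r₁}⋯X_m^{r_m}·Y − f(Z,T)`; here `Sum.inr 0 = Y`,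
`Sum.inr 1 = Z`, `Sum.inr 2 = T`. -/
noncomputable def asanumaRel (r : Fin m → ℕ) (f : MvPolynomial (Fin 2) k) :
    MvPolynomial (Fin m ⊕ Fin 3) k :=
  (∏ j : Fin m, X (Sum.inl j) ^ r j) * X (Sum.inr 0)
    - rename (fun i : Fin 2 => (Sum.inr i.succ : Fin m ⊕ Fin 3)) f

/-- The ring `E = k[X₁,…,X_m,Y,Z,T]/(X₁^{r₁}⋯X_m^{r_m}·Y − f(Z,T))`. -/
abbrev AsanumaRing (k : Type*) [Field k] {m : ℕ} (r : Fin m → ℕ)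
    (f : MvPolynomial (Fin 2) k) :=
  MvPolynomial (Fin m ⊕ Fin 3) k ⧸ Ideal.span {asanumaRel r f}

/-- The analogous relation `λ^{r₂}·X₁^{r₁}X₃^{r₃}⋯X_m^{r_m}·Y − f(Z,T)` with the
variable `X₂` removed. -/
noncomputable def asanumaRelDrop (r : Fin m → ℕ) (j₂ : Fin m) (lam : k)
    (f : MvPolynomial (Fin 2) k) :
    MvPolynomial ({i : Fin m // i ≠ j₂} ⊕ Fin 3) k :=
  C (lam ^ r j₂) * (∏ i : {i : Fin m // i ≠ j₂}, X (Sum.inl i) ^ r i.val)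
      * X (Sum.inr 0)
    - rename (fun i : Fin 2 => (Sum.inr i.succ : {i : Fin m // i ≠ j₂} ⊕ Fin 3)) f

/-! Substituting `λ` for `X₂` is a surjection `k[X, Y, Z, T] → k[X₁, X₃, …, X_m, Y, Z, T]` with
kernel `(X₂ - λ)` that sends the Asanuma relation to `λ^{r₂} X₁^{r₁} X₃^{r₃} ⋯ X_m^{r_m} Y - f`,
so `E/(x₂ - λ)` is the quotient of the smaller polynomial ring by that image. The image is linear
in `Y` with coprime coefficients (the monomial coefficient and `f(Z, T)` share no variable), hence
prime; so `E/(x₂ - λ)` is a domain. Finally `x₂ ≠ λ` in `E`: if the Asanuma relation divided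
`X₂ - λ`, the cofactor would lie in the kernel `(X₂ - λ)`, making the relation a unit, whereas its
image is prime. -/

namespace MvPolynomial

section CommSemiring

variable {R σ : Type*} [CommSemiring R]

lemma notMem_vars_rename {τ : Type*} {f : τ → σ} {v : σ} (hv : ∀ t, f t ≠ v)
    (p : MvPolynomial τ R) : v ∉ (rename f p).vars := fun h =>
  let ⟨t, _, ht⟩ := mem_vars_rename f p h
  hv t ht

lemma eq_zero_of_X_dvd_of_notMem_vars {v : σ} {p : MvPolynomial σ R} (hv : v ∉ p.vars)
    (h : X v ∣ p) : p = 0 := by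
  obtain ⟨q, rfl⟩ := h
  by_contra hp
  apply hv
  rw [mem_vars_iff_degreeOf_ne_zero, mul_comm,
    (degreeOf_mul_X_eq_degreeOf_add_one_iff v q).mpr (right_ne_zero_of_mul hp)]
  exact Nat.succ_ne_zero _

end CommSemiring

variable {R σ τ : Type*} [CommRing R]

lemma X_sub_C_ne_zero [Nontrivial R] (v : σ) (c : R) : (X v - C c : MvPolynomial σ R) ≠ 0 :=
  fun h => by simpa using congrArg totalDegree (sub_eq_zero.mp h)

lemma isRelPrime_C_mul_prod_X_pow [IsDomain R] [UniqueFactorizationMonoid R] {ι : Type*}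
    {c : R} (hc : IsUnit c) (s : Finset ι) (x : ι → σ) (n : ι → ℕ) {p : MvPolynomial σ R}
    (hp : p ≠ 0) (hx : ∀ i ∈ s, x i ∉ p.vars) :
    IsRelPrime (C c * ∏ i ∈ s, X (x i) ^ n i) p := by
  refine .mul_left (hc.map C).isRelPrime_left (.prod_left fun i hi => .pow_left ?_)
  exact X_prime.irreducible.isRelPrime_iff_not_dvd.mpr fun h =>
    hp (eq_zero_of_X_dvd_of_notMem_vars (hx i hi) h)

variable (e : Option τ ≃ σ)

noncomputable def optionEquivLeftOf : MvPolynomial σ R ≃ₐ[R] Polynomial (MvPolynomial τ R) :=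
  (renameEquiv R e.symm).trans (optionEquivLeft R τ)

noncomputable def specializeVar (c : R) : MvPolynomial σ R →ₐ[R] MvPolynomial τ R :=
  aeval fun s => (e.symm s).elim (C c) X

variable {e}

@[simp] lemma specializeVar_X_none (c : R) : specializeVar e c (X (e none)) = C c := by
  simp [specializeVar]

@[simp] lemma specializeVar_X_some (c : R) (t : τ) :
    specializeVar e c (X (e (some t))) = X t := by
  simp [specializeVar]

lemma specializeVar_rename (c : R) (p : MvPolynomial τ R) :
    specializeVar e c (rename (e ∘ some) p) = p := by
  rw [specializeVar, aeval_rename]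
  convert aeval_X_left_apply p
  ext t
  simp

lemma specializeVar_surjective (c : R) : Function.Surjective (specializeVar e c) :=
  fun p => ⟨_, specializeVar_rename c p⟩

lemma specializeVar_eq_evalRingHom_comp (c : R) :
    (specializeVar e c : MvPolynomial σ R →+* MvPolynomial τ R) =
      (Polynomial.evalRingHom (C c)).comp (optionEquivLeftOf e).toRingEquiv.toRingHom := by
  ext s
  · simp [specializeVar, optionEquivLeftOf, optionEquivLeft_C]
  · obtain ⟨_ | t, rfl⟩ := e.surjective s <;>
      simp [specializeVar, optionEquivLeftOf, optionEquivLeft_X_none, optionEquivLeft_X_some]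

lemma ker_specializeVar (c : R) :
    RingHom.ker (specializeVar e c) = Ideal.span {X (e none) - C c} := by
  rw [← RingHom.ker_coe_toRingHom, specializeVar_eq_evalRingHom_comp, ← RingHom.comap_ker,
    Polynomial.ker_evalRingHom, RingEquiv.toRingHom_eq_coe, Ideal.comap_coe, ← Ideal.map_symm,
    Ideal.map_span, Set.image_singleton]
  congr 2
  simp [optionEquivLeftOf, optionEquivLeft_symm_X, optionEquivLeft_symm_C_C]

end MvPolynomial

open Ideal in
lemma RingHom.not_dvd_of_ker_eq_span {A B : Type*} [CommRing A] [IsDomain A] [CommRing B]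
    [NoZeroDivisors B] {φ : A →+* B} {g : A} (hker : ker φ = span {g}) (hg : g ≠ 0) {a : A}
    (ha : φ a ≠ 0) (ha' : ¬IsUnit (φ a)) : ¬a ∣ g := by
  rintro ⟨q, hq⟩
  have hq0 : φ q = 0 := by
    refine (mul_eq_zero.mp ?_).resolve_left ha
    rw [← map_mul, ← hq, ← mem_ker, hker]
    exact mem_span_singleton_self g
  obtain ⟨s, rfl⟩ : g ∣ q := mem_span_singleton.mp (hker ▸ hq0)
  have has : a * s = 1 := mul_left_cancel₀ hg (by linear_combination hq.symm)
  exact ha' ((IsUnit.of_mul_eq_one s has).map φ)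

namespace AlgHom

open Ideal

variable {R A B : Type*} [CommRing R] [CommRing A] [CommRing B] [Algebra R A] [Algebra R B]
  {φ : A →ₐ[R] B}

lemma ker_quotient_mkₐ_comp (hφ : Function.Surjective φ) (a : A) :
    RingHom.ker ((Quotient.mkₐ R (span {φ a})).comp φ) = span {a} ⊔ RingHom.ker φ := by
  rw [← RingHom.ker_coe_toRingHom, AlgHom.comp_toRingHom, ← RingHom.comap_ker, Quotient.mkₐ_ker,
    comap_coe, ← Set.image_singleton, ← map_span, comap_map_of_surjective' _ hφ]

noncomputable def quotientSpanQuotientSpanEquiv (hφ : Function.Surjective φ) {g : A}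
    (hker : RingHom.ker φ = span {g}) (a : A) :
    ((A ⧸ span {a}) ⧸ span {Ideal.Quotient.mk (span {a}) g}) ≃ₐ[R] B ⧸ span {φ a} :=
  (quotientEquivAlgOfEq R (by rw [map_span, Set.image_singleton, Quotient.mkₐ_eq_mk])).trans <|
    (DoubleQuot.quotQuotEquivQuotSupₐ R (span {a}) (span {g})).trans <|
      (quotientEquivAlgOfEq R (by rw [ker_quotient_mkₐ_comp hφ, hker])).trans <|
        quotientKerAlgEquivOfSurjective
          (f := (Quotient.mkₐ R (span {φ a})).comp φ) ((Quotient.mkₐ_surjective R _).comp hφ)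

lemma prime_quotient_mk_of_ker_eq_span [IsDomain A] [IsDomain B] (hφ : Function.Surjective φ)
    {g : A} (hker : RingHom.ker φ = span {g}) (hg : g ≠ 0) {a : A} (ha : Prime (φ a)) :
    Prime (Ideal.Quotient.mk (span {a}) g) := by
  have hg' : Ideal.Quotient.mk (span {a}) g ≠ 0 := by
    rw [Ne, Quotient.eq_zero_iff_dvd]
    exact RingHom.not_dvd_of_ker_eq_span (φ := (φ : A →+* B)) hker hg ha.ne_zero ha.not_isUnit
  have : IsDomain (B ⧸ span {φ a}) :=
    (Quotient.isDomain_iff_prime _).mpr ((span_singleton_prime ha.ne_zero).mpr ha)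
  have := (quotientSpanQuotientSpanEquiv hφ hker a).toMulEquiv.isDomain
  exact (span_singleton_prime hg').mp ((Quotient.isDomain_iff_prime _).mp this)

end AlgHom

namespace Equiv

variable {α : Type*} [DecidableEq α] (a : α) (β : Type*)

def optionSubtypeNeSum : Option ({x // x ≠ a} ⊕ β) ≃ α ⊕ β where
  toFun o := o.elim (Sum.inl a) (Sum.map Subtype.val id)
  invFun := Sum.elim (fun x => if h : x = a then none else some (Sum.inl ⟨x, h⟩)) (some ∘ Sum.inr)
  left_inv := by
    rintro (_ | (⟨x, hx⟩ | b))
    · simp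
    · simp [hx]
    · rfl
  right_inv := by
    rintro (x | b)
    · by_cases h : x = a <;> simp [h]
    · rfl

@[simp] lemma optionSubtypeNeSum_none : optionSubtypeNeSum a β none = Sum.inl a := rfl

@[simp] lemma optionSubtypeNeSum_some_inl (x : {x // x ≠ a}) :
    optionSubtypeNeSum a β (some (Sum.inl x)) = Sum.inl x.val := rfl

@[simp] lemma optionSubtypeNeSum_some_inr (b : β) :
    optionSubtypeNeSum a β (some (Sum.inr b)) = Sum.inr b := rfl

end Equiv

lemma specializeVar_asanumaRel (r : Fin m → ℕ) (j : Fin m) (lam : k)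
    (f : MvPolynomial (Fin 2) k) :
    specializeVar (Equiv.optionSubtypeNeSum j (Fin 3)) lam (asanumaRel r f) =
      asanumaRelDrop r j lam f := by
  have hX (i : Fin m) : specializeVar (Equiv.optionSubtypeNeSum j (Fin 3)) lam (X (Sum.inl i)) =
      if h : i = j then C lam else X (Sum.inl ⟨i, h⟩) := by
    split_ifs with h
    · subst h; simpa using specializeVar_X_none (e := Equiv.optionSubtypeNeSum i (Fin 3)) lam
    · simpa using specializeVar_X_some (e := Equiv.optionSubtypeNeSum j (Fin 3)) lam
        (Sum.inl ⟨i, h⟩)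
  have hY : specializeVar (Equiv.optionSubtypeNeSum j (Fin 3)) lam (X (Sum.inr 0)) =
      X (Sum.inr 0) := by
    simpa using specializeVar_X_some (e := Equiv.optionSubtypeNeSum j (Fin 3)) lam (Sum.inr 0)
  have hf : rename (fun i : Fin 2 => (Sum.inr i.succ : Fin m ⊕ Fin 3)) f =
      rename (Equiv.optionSubtypeNeSum j (Fin 3) ∘ some)
        (rename (fun i : Fin 2 => Sum.inr i.succ) f) := by
    rw [rename_rename]
    congr 1
  rw [asanumaRel, asanumaRelDrop, map_sub, map_mul, map_prod,
    Fintype.prod_eq_mul_prod_subtype_ne _ j, hf, specializeVar_rename]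
  simp only [map_pow, hX, hY, dite_true]
  congr 3
  exact Finset.prod_congr rfl fun x _ => by rw [dif_neg x.2]

lemma prime_asanumaRelDrop (r : Fin m → ℕ) (j : Fin m) {lam : k} (hlam : lam ≠ 0)
    {f : MvPolynomial (Fin 2) k} (hf : f ≠ 0) : Prime (asanumaRelDrop r j lam f) := by
  have hf' : -rename (fun i : Fin 2 => (Sum.inr i.succ : {i // i ≠ j} ⊕ Fin 3)) f ≠ 0 := by
    rw [neg_ne_zero, Ne, map_eq_zero_iff _ (rename_injective _ fun _ _ h => by simpa using h)]
    exact hf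
  rw [← UniqueFactorizationMonoid.irreducible_iff_prime, asanumaRelDrop, sub_eq_add_neg]
  refine irreducible_mul_X_add _ _ _ ?_ ?_ ?_ ?_
  · simp [hlam, Finset.prod_ne_zero_iff, X_ne_zero]
  · have : C (lam ^ r j) * ∏ i : {i // i ≠ j}, X (Sum.inl i) ^ r i.val =
        rename (Sum.inl : _ → {i // i ≠ j} ⊕ Fin 3) (C (lam ^ r j) * ∏ i, X i ^ r i.val) := by
      simp [map_prod]
    rw [this]
    exact notMem_vars_rename (fun _ => Sum.inl_ne_inr) _
  · rw [vars_neg]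
    exact notMem_vars_rename (fun t => by simp [Fin.succ_ne_zero]) f
  · exact isRelPrime_C_mul_prod_X_pow ((pow_ne_zero _ hlam).isUnit) _ _ _ hf' fun i _ => by
      rw [vars_neg]; exact notMem_vars_rename (fun t => Sum.inr_ne_inl) f

theorem asanuma_ring_mod_x2_sub_lambda_general
    (hm : 1 < m) (r : Fin m → ℕ)
    (f : MvPolynomial (Fin 2) k) (hf : f ≠ 0)
    (lam : k) (hlam : lam ≠ 0) :
    Prime (Ideal.Quotient.mk (Ideal.span {asanumaRel r f})
        (X (Sum.inl ⟨1, hm⟩) - C lam) : AsanumaRing k r f) ∧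
    Nonempty ((AsanumaRing k r f ⧸
        Ideal.span {(Ideal.Quotient.mk (Ideal.span {asanumaRel r f})
          (X (Sum.inl ⟨1, hm⟩) - C lam) : AsanumaRing k r f)})
      ≃ₐ[k] (MvPolynomial ({i : Fin m // i ≠ ⟨1, hm⟩} ⊕ Fin 3) k ⧸
        Ideal.span {asanumaRelDrop r ⟨1, hm⟩ lam f})) := by
  let e := Equiv.optionSubtypeNeSum (⟨1, hm⟩ : Fin m) (Fin 3)
  have hφ : Function.Surjective (specializeVar e lam) := specializeVar_surjective lam
  have hker : RingHom.ker (specializeVar e lam) = Ideal.span {X (Sum.inl ⟨1, hm⟩) - C lam} :=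
    ker_specializeVar lam
  have hrel : specializeVar e lam (asanumaRel r f) = asanumaRelDrop r ⟨1, hm⟩ lam f :=
    specializeVar_asanumaRel r _ lam f
  refine ⟨?_, ⟨?_⟩⟩
  · refine AlgHom.prime_quotient_mk_of_ker_eq_span hφ hker (X_sub_C_ne_zero _ _) ?_
    rw [hrel]
    exact prime_asanumaRelDrop r _ hlam hf
  · exact (AlgHom.quotientSpanQuotientSpanEquiv hφ hker _).trans
      (Ideal.quotientEquivAlgOfEq k (by rw [hrel]))

/-- For `E = k[X₁,…,X_m,Y,Z,T]/(X₁^{r₁}⋯X_m^{r_m}Y − f(Z,T))` (assumed a domain)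
with `m ≥ 2` and `f ≠ 0`, for every `λ ∈ k*` the element `x₂ − λ` is prime in `E`
and `E/(x₂−λ) ≅ k[X₁,X₃,…,X_m,Y,Z,T]/(λ^{r₂}X₁^{r₁}X₃^{r₃}⋯X_m^{r_m}Y − f)`. -/
theorem asanuma_ring_mod_x2_sub_lambda
    (hm : 1 < m) (r : Fin m → ℕ) (hr : ∀ j, 1 < r j)
    (f : MvPolynomial (Fin 2) k) (hf : f ≠ 0)
    (hdom : IsDomain (AsanumaRing k r f))
    (lam : k) (hlam : lam ≠ 0) :
    Prime (Ideal.Quotient.mk (Ideal.span {asanumaRel r f})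
        (X (Sum.inl ⟨1, hm⟩) - C lam) : AsanumaRing k r f) ∧
    Nonempty ((AsanumaRing k r f ⧸
        Ideal.span {(Ideal.Quotient.mk (Ideal.span {asanumaRel r f})
          (X (Sum.inl ⟨1, hm⟩) - C lam) : AsanumaRing k r f)})
      ≃ₐ[k] (MvPolynomial ({i : Fin m // i ≠ ⟨1, hm⟩} ⊕ Fin 3) k ⧸
        Ideal.span {asanumaRelDrop r ⟨1, hm⟩ lam f})) :=
  asanuma_ring_mod_x2_sub_lambda_general hm r f hf lam hlam
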